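/- Define Υ : 2^{Σ_K} ⊔ C_K → 2^{Σ_K} by Υ(T) := T for T ∈ 2^{Σ_K} and Υ(a) := ∅ for a ∈ C_K. Then Υ is continuous and open as a map from (2^{Σ_K} ⊔ C_K, qo) to (2^{Σ_K}, power-cofinite topology). -/

import Mathlib

open NumberField IsDedekindDomain

noncomputable section

variable (K : Type*) [Field K] [NumberField K]

/-- The set of places of the number field `K`: infinite places plus finite places
(nonzero primes of the ring of integers). -/
abbrev Place := InfinitePlace K ⊕ HeightOneSpectrum (𝓞 K)

/-- The local completion of `K` at a place. -/
def LocalField : Place K → Type _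
  | .inl w => w.Completion
  | .inr v => v.adicCompletion K

instance : ∀ v : Place K, TopologicalSpace (LocalField K v)
  | .inl w => inferInstanceAs (TopologicalSpace w.Completion)
  | .inr v => inferInstanceAs (TopologicalSpace (v.adicCompletion K))

instance : ∀ v : Place K, Zero (LocalField K v)
  | .inl w => inferInstanceAs (Zero w.Completion)
  | .inr v => inferInstanceAs (Zero (v.adicCompletion K))

/-- The `v`-coordinate of an adele. -/
def coord (a : AdeleRing (𝓞 K) K) : ∀ v : Place K, LocalField K v
  | .inl w => a.1 w
  | .inr v => a.2 v

/-- The local ring of integers `O_{K,v}`: for a finite place, the ring of integers of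
`K_v`; for an infinite place, by convention, all of `K_v`. -/
def localIntegers : ∀ v : Place K, Set (LocalField K v)
  | .inl _ => Set.univ
  | .inr v => (v.adicCompletionIntegers K : Set (v.adicCompletion K))

/-- The zero set `Z(a)` of an adele: the set of places where the component of `a` vanishes. -/
def zeroSet (a : AdeleRing (𝓞 K) K) : Set (Place K) := {v | coord K a v = 0}

open scoped Classical in
/-- The normalized absolute value at a place `v`, as a function on the local field:
for a real place the usual absolute value, for a complex place its square, and for a
finite place `N(v)^(-val(x))`. -/
def placeAbs : ∀ v : Place K, LocalField K v → ℝ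
  | .inl w => fun x : w.Completion => if w.IsReal then ‖x‖ else ‖x‖ ^ 2
  | .inr v => fun x : v.adicCompletion K =>
      if hx : Valued.v x = (0 : WithZero (Multiplicative ℤ)) then 0
      else (Nat.card (𝓞 K ⧸ v.asIdeal) : ℝ) ^ Multiplicative.toAdd (WithZero.unzero hx)

/-- The normalized absolute value `|a|_v` of an adele at a place. -/
def adeleAbs (v : Place K) (a : AdeleRing (𝓞 K) K) : ℝ := placeAbs K v (coord K a v)

/-- The adelic norm `‖a‖ = ∏_v |a|_v`, defined as the infimum of the partial products over
finite sets of places containing every place where `|a|_v > 1`. -/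
def adelicNorm (a : AdeleRing (𝓞 K) K) : ℝ :=
  sInf {r : ℝ | ∃ F : Finset (Place K),
    (∀ v : Place K, 1 < adeleAbs K v a → v ∈ F) ∧ r = ∏ v ∈ F, adeleAbs K v a}

/-- The subgroup of principal ideles. -/
def principalIdeles : Subgroup (AdeleRing (𝓞 K) K)ˣ :=
  (Units.map (algebraMap K (AdeleRing (𝓞 K) K)).toMonoidHom).range

/-- The idele class group `C_K = A_K^*/K^*`, with the quotient of the idelic topology.
(The idelic topology on `A_K^*` is the topology of the unit group `(A_K)ˣ`, i.e. the
subspace topology under `a ↦ (a, a⁻¹)`.) -/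
abbrev IdeleClassGroup := (AdeleRing (𝓞 K) K)ˣ ⧸ principalIdeles K

/-- The orbit `K^*·a` of an adele under the multiplication action of `K^*`. -/
def mulOrbit (a : AdeleRing (𝓞 K) K) : Set (AdeleRing (𝓞 K) K) :=
  {b | ∃ x : Kˣ, algebraMap K (AdeleRing (𝓞 K) K) (x : K) * a = b}

open scoped Classical in
/-- The map `Ξ : A_K → 2^{Σ_K} ⊔ C_K`. -/
def Xi (a : AdeleRing (𝓞 K) K) : Set (Place K) ⊕ IdeleClassGroup K :=
  if h : IsUnit a then Sum.inr (QuotientGroup.mk h.unit)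
  else Sum.inl (zeroSet K a)

/-- The quasi-orbit topology on `2^{Σ_K} ⊔ C_K`: the final topology induced by `Ξ`. -/
def qoTop : TopologicalSpace (Set (Place K) ⊕ IdeleClassGroup K) :=
  TopologicalSpace.coinduced (Xi K) inferInstance

/-- The power-cofinite topology on `2^{Σ_K}`, generated by the sets
`U_F = {T : T ∩ F = ∅}` for finite `F ⊆ Σ_K`. -/
def pcTop : TopologicalSpace (Set (Place K)) :=
  TopologicalSpace.generateFrom
    {S | ∃ F : Finset (Place K), S = {T : Set (Place K) | ∀ v ∈ F, v ∉ T}}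

/-- The norm on the idele class group (defined via representatives; by the product
formula it does not depend on the choice of representative). -/
def classNorm (c : IdeleClassGroup K) : ℝ := adelicNorm K (Quotient.out c : (AdeleRing (𝓞 K) K)ˣ)

/-!
Composing `Υ` with `Ξ` gives the zero-set map `Z`, because ideles have no zero coordinates, and
`Z` is continuous for the power-cofinite topology because each condition `a_v ≠ 0` is open.

For openness, fix an adele `a` and an open neighbourhood `V` of it. `V` contains a box that
constrains finitely many coordinates to neighbourhoods of the `a_v` and all others to `O_v`.
Hence there is a finite set `F` of places such that every `T` avoiding the places of `F` with
`a_v ≠ 0` is the zero set of a non-invertible adele of `V`: take `0` on `T`, nonzero points of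
the boxes on `F \ T`, and nonzero non-units of `O_v` elsewhere. Since there are infinitely many
finite places, the last choice makes the adele non-invertible even when `T` is empty.
-/

open IsDedekindDomain.HeightOneSpectrum Topology Filter
open scoped RestrictedProduct

theorem IsDedekindDomain.HeightOneSpectrum.infinite_of_isIntegral_int (S : Type*) [CommRing S]
    [IsDomain S] [CharZero S] [Algebra.IsIntegral ℤ S] : Infinite (HeightOneSpectrum S) := by
  have hker : RingHom.ker (algebraMap ℤ S) = ⊥ :=
    (RingHom.injective_iff_ker_eq_bot _).mp (algebraMap ℤ S).injective_int
  have lies_over : ∀ p : {p : ℕ // p.Prime}, ∃ v : HeightOneSpectrum S,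
      v.asIdeal.comap (algebraMap ℤ S) = Ideal.span {((p : ℕ) : ℤ)} := by
    rintro ⟨p, hp⟩
    have : (Ideal.span {(p : ℤ)}).IsMaximal :=
      PrincipalIdealRing.isMaximal_of_irreducible (Nat.prime_iff_prime_int.mp hp).irreducible
    obtain ⟨Q, hQ, hQp⟩ := Ideal.exists_ideal_over_maximal_of_isIntegral (S := S)
      (Ideal.span {(p : ℤ)}) (hker.trans_le bot_le)
    refine ⟨⟨Q, hQ.isPrime, fun hQ0 => hp.ne_zero ?_⟩, hQp⟩
    rw [hQ0, ← RingHom.ker_eq_comap_bot, hker, eq_comm, Ideal.span_singleton_eq_bot] at hQp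
    exact_mod_cast hQp
  choose f hf using lies_over
  have : Infinite {p : ℕ // p.Prime} := Nat.infinite_setOfPred_prime.to_subtype
  refine Infinite.of_injective f fun p q hpq => Subtype.ext ?_
  have := (hf p).symm.trans (hpq ▸ hf q)
  rw [Ideal.span_singleton_eq_span_singleton, Int.associated_iff_natAbs] at this
  exact_mod_cast this

instance : Infinite (HeightOneSpectrum (𝓞 K)) :=
  infinite_of_isIntegral_int _

variable {K}

theorem IsDedekindDomain.HeightOneSpectrum.exists_ne_zero_valued_lt_one
    (v : HeightOneSpectrum (𝓞 K)) : ∃ x : v.adicCompletion K, x ≠ 0 ∧ Valued.v x < 1 := by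
  obtain ⟨π, hπ⟩ := v.valuation_exists_uniformizer K
  have hval : Valued.v (π : v.adicCompletion K) = WithZero.exp (-1) := by
    rw [valuedAdicCompletion_eq_valuation', hπ]
  refine ⟨π, (Valuation.ne_zero_iff (Valued.v (R := v.adicCompletion K))).mp ?_, ?_⟩ <;> rw [hval]
  · simp
  · rw [← WithZero.exp_zero, WithZero.exp_lt_exp]; norm_num

theorem dense_compl_zero_localField : ∀ p : Place K, Dense ({0}ᶜ : Set (LocalField K p))
  | .inl w => by
    have h2 : ‖(2 : w.Completion)‖ = 2 := by
      rw [← (InfinitePlace.Completion.isometry_extensionEmbedding w).norm_map_of_map_zero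
        (map_zero _), map_ofNat]
      norm_num
    let := NontriviallyNormedField.ofNormNeOne (𝕜 := w.Completion)
      ⟨2, norm_ne_zero_iff.mp (by norm_num [h2]), by norm_num [h2]⟩
    exact dense_compl_singleton (0 : w.Completion)
  | .inr v => by
    obtain ⟨x, hx0, hx1⟩ := v.exists_ne_zero_valued_lt_one
    let := NontriviallyNormedField.ofNormNeOne (𝕜 := v.adicCompletion K)
      ⟨x, hx0, (Valued.toNormedField.norm_lt_one_iff.mpr hx1).ne⟩
    exact dense_compl_singleton (0 : v.adicCompletion K)

theorem Finset.eventually_cofinite_inr_notMem {α β : Type*} (F : Finset (α ⊕ β)) :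
    ∀ᶠ b in cofinite, Sum.inr b ∉ F :=
  (F.finite_toSet.preimage Sum.inr_injective.injOn).compl_mem_cofinite

theorem coord_ne_zero_of_isUnit {a : AdeleRing (𝓞 K) K} (ha : IsUnit a) :
    ∀ p, coord K a p ≠ 0
  | .inl w => ((Pi.isUnit_iff.mp (ha.map (RingHom.fst _ _))) w).ne_zero
  | .inr v => (FiniteAdeleRing.isUnit_iff.mp (ha.map (RingHom.snd _ _))).1 v

theorem zeroSet_eq_empty_of_isUnit {a : AdeleRing (𝓞 K) K} (ha : IsUnit a) :
    zeroSet K a = ∅ :=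
  Set.eq_empty_of_forall_notMem (coord_ne_zero_of_isUnit ha)

theorem not_isUnit_of_forall_notMem_valued_lt_one {b : AdeleRing (𝓞 K) K} (F : Finset (Place K))
    (hb : ∀ v, .inr v ∉ F → Valued.v (b.2 v) < 1) : ¬ IsUnit b := fun hu => by
  obtain ⟨v, hv1, hvF⟩ := ((FiniteAdeleRing.isUnit_iff.mp (hu.map (RingHom.snd _ _))).2.and
    F.eventually_cofinite_inr_notMem).exists
  exact (hb v hvF).ne hv1

theorem isOpen_setOf_coord_ne_zero :
    ∀ p : Place K, IsOpen {a : AdeleRing (𝓞 K) K | coord K a p ≠ 0}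
  | .inl w => isOpen_ne_fun (f := fun a : AdeleRing (𝓞 K) K => a.1 w)
      ((continuous_apply w).comp continuous_fst) continuous_const
  | .inr v => isOpen_ne_fun (f := fun a : AdeleRing (𝓞 K) K => a.2 v)
      ((RestrictedProduct.continuous_eval v).comp continuous_snd) continuous_const

theorem continuous_zeroSet : Continuous[_, pcTop K] (zeroSet K) := by
  refine continuous_generateFrom_iff.mpr ?_
  rintro _ ⟨F, rfl⟩
  have : zeroSet K ⁻¹' {T | ∀ p ∈ F, p ∉ T} = ⋂ p ∈ F, {a | coord K a p ≠ 0} := by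
    ext; simp [zeroSet]
  rw [this]
  exact isOpen_biInter_finset fun p _ => isOpen_setOf_coord_ne_zero p

namespace RestrictedProduct

theorem exists_finite_forall_mem_of_mem_nhds {ι : Type*} {R : ι → Type*}
    [∀ i, TopologicalSpace (R i)] {A : ∀ i, Set (R i)} (hAopen : ∀ i, IsOpen (A i))
    {x : Πʳ i, [R i, A i]} {V : Set (Πʳ i, [R i, A i])} (hV : V ∈ 𝓝 x) :
    ∃ S : Set ι, S.Finite ∧ ∃ W : ∀ i, Set (R i), (∀ i, W i ∈ 𝓝 (x i)) ∧
      ∀ y : Πʳ i, [R i, A i], (∀ i ∈ S, y i ∈ W i) → (∀ i ∉ S, y i ∈ A i) → y ∈ V := by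
  set S₀ := {i | x i ∉ A i}
  have hS₀ : S₀.Finite := x.2
  have hS₀' : cofinite ≤ 𝓟 S₀ᶜ := le_principal_iff.mpr hS₀.compl_mem_cofinite
  let x' : Πʳ i, [R i, A i]_[𝓟 S₀ᶜ] := ⟨x, eventually_principal.mpr fun i hi => not_not.mp hi⟩
  rw [show x = inclusion R A hS₀' x' from rfl, nhds_eq_map_inclusion hAopen hS₀', mem_map,
    isEmbedding_coe_of_principal.nhds_eq_comap, mem_comap] at hV
  obtain ⟨P, hP, hPV⟩ := hV
  rw [nhds_pi, mem_pi] at hP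
  obtain ⟨I, hI, t, ht, hIt⟩ := hP
  refine ⟨S₀ ∪ I, hS₀.union hI, fun i => t i ∩ {z | x i ∈ A i → z ∈ A i},
    fun i => inter_mem (ht i) ?_, fun y hyS hyA => ?_⟩
  · by_cases hi : x i ∈ A i
    · exact mem_of_superset ((hAopen i).mem_nhds hi) fun z hz _ => hz
    · simp [hi]
  · have hy : ∀ i ∈ S₀ᶜ, y i ∈ A i := fun i hi => by
      by_cases hiI : i ∈ I
      · exact (hyS i (.inr hiI)).2 (not_not.mp hi)
      · exact hyA i (by simp_all [S₀])
    exact hPV (a := ⟨y, eventually_principal.mpr hy⟩) (hIt fun i hi => (hyS i (.inr hi)).1)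

end RestrictedProduct

theorem exists_finset_forall_mem_of_mem_nhds {a : AdeleRing (𝓞 K) K}
    {V : Set (AdeleRing (𝓞 K) K)} (hV : V ∈ 𝓝 a) :
    ∃ F : Finset (Place K), ∃ W : ∀ p, Set (LocalField K p), (∀ p, W p ∈ 𝓝 (coord K a p)) ∧
      ∀ b, (∀ p ∈ F, coord K b p ∈ W p) → (∀ p ∉ F, coord K b p ∈ localIntegers K p) → b ∈ V := by
  classical
  obtain ⟨V₁, hV₁, V₂, hV₂, hV⟩ := mem_nhds_prod_iff.mp hV
  obtain ⟨I, -, t, ht, htV⟩ :=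
    (mem_pi (s := (V₁ : Set (∀ w : InfinitePlace K, w.Completion)))).mp
      (by rwa [← nhds_pi (A := fun w : InfinitePlace K => w.Completion)])
  obtain ⟨S, hS, W, hW, hWV⟩ := RestrictedProduct.exists_finite_forall_mem_of_mem_nhds
    (fun v => Valued.isOpen_valuationSubring _) hV₂
  refine ⟨Finset.univ.image .inl ∪ hS.toFinset.image .inr,
    fun | .inl w => t w | .inr v => W v, fun | .inl w => ht w | .inr v => hW v,
    fun b hbF hbO => hV ⟨htV fun w _ => hbF (.inl w) (by simp), hWV b.2 ?_ ?_⟩⟩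
  · exact fun v hv => hbF (.inr v) (by simp [hv])
  · exact fun v hv => hbO (.inr v) (by simp [hv])

theorem exists_finset_forall_exists_not_isUnit_zeroSet_eq {a : AdeleRing (𝓞 K) K}
    {V : Set (AdeleRing (𝓞 K) K)} (hV : V ∈ 𝓝 a) :
    ∃ F : Finset (Place K), ∀ T : Set (Place K), (∀ p ∈ F, p ∈ T → coord K a p = 0) →
      ∃ b ∈ V, ¬ IsUnit b ∧ zeroSet K b = T := by
  classical
  obtain ⟨F, W, hW, hWV⟩ := exists_finset_forall_mem_of_mem_nhds hV
  refine ⟨F, fun T hT => ?_⟩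
  choose y hy0 hyW using fun p => (dense_compl_zero_localField p).inter_nhds_nonempty (hW p)
  have h0 : ∀ p ∈ F, p ∈ T → (0 : LocalField K p) ∈ W p := fun p hp hpT =>
    hT p hp hpT ▸ mem_of_mem_nhds (hW p)
  have hz : ∀ v : HeightOneSpectrum (𝓞 K), ∃ z : v.adicCompletion K, z ≠ 0 ∧
      (Sum.inr v ∈ F → z ∈ W (.inr v)) ∧ (Sum.inr v ∉ F → Valued.v z < 1) := fun v => by
    by_cases hv : Sum.inr v ∈ F
    · exact ⟨y (.inr v), hy0 _, fun _ => hyW _, (absurd hv ·)⟩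
    · obtain ⟨z, hz0, hz1⟩ := v.exists_ne_zero_valued_lt_one
      exact ⟨z, hz0, (absurd · hv), fun _ => hz1⟩
  choose z hz0 hzW hz1 using hz
  let bfin : ∀ v : HeightOneSpectrum (𝓞 K), v.adicCompletion K := fun v =>
    if .inr v ∈ T then 0 else z v
  have hbfin : ∀ v, Sum.inr v ∉ F → Valued.v (bfin v) < 1 := fun v hv => by
    by_cases hvT : Sum.inr v ∈ T <;> simp [bfin, hvT, hz1 v hv]
  let b : AdeleRing (𝓞 K) K := (fun w => if .inl w ∈ T then 0 else y (.inl w),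
    ⟨bfin, by
      filter_upwards [F.eventually_cofinite_inr_notMem] with v hv
      exact (mem_adicCompletionIntegers _ _ _).mpr (hbfin v hv).le⟩)
  have hb_inl : ∀ w, coord K b (.inl w) = if .inl w ∈ T then 0 else y (.inl w) := fun _ => rfl
  have hb_inr : ∀ v, coord K b (.inr v) = if .inr v ∈ T then 0 else z v := fun _ => rfl
  refine ⟨b, hWV b (fun p hp => ?_) ?_, not_isUnit_of_forall_notMem_valued_lt_one F hbfin, ?_⟩
  · rcases p with w | v
    · rw [hb_inl]
      split_ifs with hpT
      exacts [h0 _ hp hpT, hyW _]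
    · rw [hb_inr]
      split_ifs with hpT
      exacts [h0 _ hp hpT, hzW v hp]
  · rintro (w | v) hp
    · trivial
    · exact (mem_adicCompletionIntegers _ _ _).mpr (hbfin v hp).le
  · ext (w | v)
    · change coord K b _ = 0 ↔ _
      rw [hb_inl]
      split_ifs with hpT
      exacts [iff_of_true rfl hpT, iff_of_false (hy0 _) hpT]
    · change coord K b _ = 0 ↔ _
      rw [hb_inr]
      split_ifs with hpT
      exacts [iff_of_true rfl hpT, iff_of_false (hz0 v) hpT]

theorem Xi_of_not_isUnit {a : AdeleRing (𝓞 K) K} (ha : ¬ IsUnit a) :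
    Xi K a = .inl (zeroSet K a) := by
  rw [Xi, dif_neg ha]

theorem Xi_surjective : Function.Surjective (Xi K) := by
  rintro (T | c)
  · obtain ⟨F, hF⟩ := exists_finset_forall_exists_not_isUnit_zeroSet_eq
      (a := (0 : AdeleRing (𝓞 K) K)) univ_mem
    obtain ⟨b, -, hb, rfl⟩ := hF T fun p _ _ => by cases p <;> rfl
    exact ⟨b, Xi_of_not_isUnit hb⟩
  · induction c using QuotientGroup.induction_on with
    | H u => exact ⟨u, by rw [Xi, dif_pos u.isUnit, IsUnit.unit_of_val_units]⟩

theorem upsilon_comp_Xi :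
    Sum.elim id (fun _ : IdeleClassGroup K => (∅ : Set (Place K))) ∘ Xi K = zeroSet K := by
  funext a
  by_cases ha : IsUnit a
  · simp [Xi, ha, zeroSet_eq_empty_of_isUnit ha]
  · simp [Xi_of_not_isUnit ha]

/-- The map `Υ : 2^{Σ_K} ⊔ C_K → 2^{Σ_K}`, identity on `2^{Σ_K}` and constant `∅` on `C_K`,
is continuous and open from the quasi-orbit topology to the power-cofinite topology. -/
theorem upsilon_continuous_isOpenMap :
    @Continuous _ _ (qoTop K) (pcTop K)
      (Sum.elim id fun _ : IdeleClassGroup K => (∅ : Set (Place K))) ∧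
    @IsOpenMap _ _ (qoTop K) (pcTop K)
      (Sum.elim id fun _ : IdeleClassGroup K => (∅ : Set (Place K))) := by
  classical
  refine ⟨?_, fun U hU => ?_⟩
  · rw [qoTop, continuous_coinduced_dom, upsilon_comp_Xi]
    exact continuous_zeroSet
  · let := pcTop K
    refine isOpen_iff_forall_mem_open.mpr ?_
    rintro _ ⟨x, hxU, rfl⟩
    obtain ⟨a, rfl⟩ := Xi_surjective x
    obtain ⟨F, hF⟩ := exists_finset_forall_exists_not_isUnit_zeroSet_eq
      ((show IsOpen (Xi K ⁻¹' U) from hU).mem_nhds hxU)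
    refine ⟨{T | ∀ p ∈ F.filter (coord K a · ≠ 0), p ∉ T}, fun T hT => ?_,
      TopologicalSpace.isOpen_generateFrom_of_mem ⟨_, rfl⟩, ?_⟩
    · obtain ⟨b, hbU, hb, rfl⟩ := hF T fun p hp hpT =>
        by_contra fun h => hT p (Finset.mem_filter.mpr ⟨hp, h⟩) hpT
      exact ⟨Xi K b, hbU, by rw [Xi_of_not_isUnit hb]; rfl⟩
    · rw [← Function.comp_apply (f := Sum.elim _ _), upsilon_comp_Xi]
      exact fun p hp => (Finset.mem_filter.mp hp).2
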